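/- An infinite, finitely generated simple group admits no nontrivial finite-dimensional linear representation over any field: if G is an infinite simple group that is finitely generated, then every group homomorphism G → GL_n(k) (k a field, n a natural number) is trivial. -/

import Mathlib

/-!
A finitely generated subgroup of `GL n k` has its matrix entries (and those of the inverses) in a
finitely generated `ℤ`-algebra `A ⊆ k`. Such an `A` is a Jacobson ring whose residue fields are
finite, so any `g ≠ 1` survives reduction modulo some maximal ideal `m` in the finite group
`GL n (A ⧸ m)`: the group is residually finite (Mal'cev). A simple group with a nontrivial
representation embeds into `GL n k`, and a residually finite simple group is finite.
-/

instance Int.instIsJacobsonRing : IsJacobsonRing ℤ := by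
  rw [isJacobsonRing_iff_prime_eq]
  intro P hP
  rcases eq_or_ne P ⊥ with rfl | hP0
  · refine le_antisymm (fun x hx => ?_) Ideal.le_jacobson
    -- `x * x + 1` is a unit of `ℤ` only when `x = 0`
    have hunit := Ideal.mem_jacobson_bot.mp hx x
    rw [Int.isUnit_iff] at hunit
    rw [Ideal.mem_bot]
    rcases hunit with h | h <;> nlinarith
  · have := Ideal.IsPrime.isMaximal hP hP0
    exact Ideal.jacobson_eq_self_of_isMaximal

theorem finite_of_field_of_finiteType_int (F : Type*) [Field F] [Algebra.FiniteType ℤ F] :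
    Finite F := by
  have : Module.Finite ℤ F := finite_of_finite_type_of_isJacobsonRing ℤ F
  obtain ⟨p, hp⟩ := CharP.exists F
  rcases CharP.char_is_prime_or_zero F p with hprime | rfl
  · refine Module.finite_of_fg_torsion F fun x =>
      ⟨⟨p, mem_nonZeroDivisors_of_ne_zero (by exact_mod_cast hprime.ne_zero)⟩, ?_⟩
    rw [Submonoid.mk_smul, zsmul_eq_mul, Int.cast_natCast, CharP.cast_eq_zero, zero_mul]
  · -- otherwise the field `F` would be integral over `ℤ ⊆ F`, forcing `ℤ` to be a field
    have : CharZero F := CharP.charP_to_charZero F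
    exact absurd rfl (Ideal.IsMaximal.ne_bot_of_isIntegral_int (⊥ : Ideal F))

theorem Ideal.finite_quotient_of_finiteType_int {A : Type*} [CommRing A]
    [Algebra.FiniteType ℤ A] (m : Ideal A) [m.IsMaximal] : Finite (A ⧸ m) := by
  let := Ideal.Quotient.field m
  have := Algebra.FiniteType.of_surjective (Ideal.Quotient.mk m).toIntAlgHom
    Ideal.Quotient.mk_surjective
  exact finite_of_field_of_finiteType_int (A ⧸ m)

theorem exists_isMaximal_notMem_of_ne_zero {A : Type*} [CommRing A] [IsJacobsonRing A]
    [IsReduced A] {a : A} (ha : a ≠ 0) : ∃ m : Ideal A, m.IsMaximal ∧ a ∉ m := by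
  have hjac : (⊥ : Ideal A).jacobson = ⊥ := IsJacobsonRing.out' _ Ideal.isRadical_bot
  have : a ∉ (⊥ : Ideal A).jacobson := by rwa [hjac, Ideal.mem_bot]
  simp only [Ideal.jacobson, Ideal.mem_sInf, not_forall] at this
  obtain ⟨m, ⟨-, hm⟩, ham⟩ := this
  exact ⟨m, hm, ham⟩

theorem Group.ResiduallyFinite.of_injective {G H : Type*} [Group G] [Group H]
    [Group.ResiduallyFinite H] {f : G →* H} (hf : Function.Injective f) :
    Group.ResiduallyFinite G := by
  rw [Group.residuallyFinite_iff_forall_finiteIndexNormalSubgroup]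
  refine fun g hg => hf ?_
  rw [map_one]
  exact Group.eq_one_iff_forall_finiteIndexNormalSubroup _ fun K => hg (K.comap f)

namespace Matrix.GeneralLinearGroup

variable {n R S : Type*} [Fintype n] [DecidableEq n] [CommRing R] [CommRing S]

theorem map_injective {f : R →+* S} (hf : Function.Injective f) :
    Function.Injective (map (n := n) f) := fun _ _ h =>
  Units.ext (Matrix.map_injective hf (congrArg Units.val h))

theorem mem_range_map {f : R →+* S} (hf : Function.Injective f) {x : GL n S}
    (hx : ∀ i j, x i j ∈ f.range) (hx' : ∀ i j, x⁻¹ i j ∈ f.range) :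
    x ∈ (map (n := n) f).range := by
  choose M hM using hx
  choose M' hM' using hx'
  have hM : f.mapMatrix (Matrix.of M) = x := Matrix.ext hM
  have hM' : f.mapMatrix (Matrix.of M') = x⁻¹.val := Matrix.ext hM'
  have hinj : Function.Injective (f.mapMatrix : Matrix n n R → Matrix n n S) :=
    Matrix.map_injective hf
  refine ⟨⟨Matrix.of M, Matrix.of M', hinj ?_, hinj ?_⟩, Units.ext hM⟩
  · rw [map_mul, hM, hM', map_one, Units.mul_inv]
  · rw [map_mul, hM, hM', map_one, Units.inv_mul]

instance instResiduallyFinite [IsReduced R] [Algebra.FiniteType ℤ R] :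
    Group.ResiduallyFinite (GL n R) := by
  refine Group.residuallyFinite_of_forall_exists_finite_monoidHom fun x hx => ?_
  obtain ⟨i, j, hij⟩ : ∃ i j, x i j - (1 : Matrix n n R) i j ≠ 0 := by
    by_contra! h
    exact hx (Units.ext (Matrix.ext fun i j => sub_eq_zero.mp (h i j)))
  have : IsJacobsonRing R := isJacobsonRing_of_finiteType (A := ℤ)
  obtain ⟨m, hm, hijm⟩ := exists_isMaximal_notMem_of_ne_zero hij
  have := Ideal.finite_quotient_of_finiteType_int m
  refine ⟨GL n (R ⧸ m), inferInstance, inferInstance, map (Ideal.Quotient.mk m),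
    fun h => hijm ?_⟩
  rw [← Ideal.Quotient.eq]
  calc Ideal.Quotient.mk m (x i j) = map (Ideal.Quotient.mk m) x i j := rfl
    _ = map (Ideal.Quotient.mk m) 1 i j := by rw [h, map_one]
    _ = Ideal.Quotient.mk m ((1 : Matrix n n R) i j) := rfl

theorem exists_finiteType_range_le_range_map {G k : Type*} [Group G] [Group.FG G]
    [CommRing k] (φ : G →* GL n k) :
    ∃ A : Subalgebra ℤ k, Algebra.FiniteType ℤ A ∧
      φ.range ≤ (map (A.val : A →+* k)).range := by
  obtain ⟨S, hS⟩ := Group.FG.out (G := G)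
  let E : Set k := ⋃ s ∈ S, (Set.range fun p : n × n => φ s p.1 p.2) ∪
    Set.range fun p : n × n => (φ s)⁻¹ p.1 p.2
  have hE : E.Finite :=
    S.finite_toSet.biUnion fun _ _ => (Set.finite_range _).union (Set.finite_range _)
  refine ⟨Algebra.adjoin ℤ E, ?_, ?_⟩
  · rw [← Subalgebra.fg_iff_finiteType, ← hE.coe_toFinset]
    exact Subalgebra.fg_adjoin_finset _
  · rw [MonoidHom.range_eq_map, ← hS, MonoidHom.map_closure, Subgroup.closure_le]
    rintro _ ⟨s, hs, rfl⟩
    refine mem_range_map Subtype.val_injective (fun i j => ?_) (fun i j => ?_)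
    exacts [⟨⟨_, Algebra.subset_adjoin (Set.mem_biUnion hs (.inl ⟨(i, j), rfl⟩))⟩, rfl⟩,
      ⟨⟨_, Algebra.subset_adjoin (Set.mem_biUnion hs (.inr ⟨(i, j), rfl⟩))⟩, rfl⟩]

theorem residuallyFinite_of_injective {G k : Type*} [Group G] [Group.FG G] [CommRing k]
    [IsReduced k] {φ : G →* GL n k} (hφ : Function.Injective φ) :
    Group.ResiduallyFinite G := by
  obtain ⟨A, hA, hle⟩ := exists_finiteType_range_le_range_map φ
  have : IsReduced A := isReduced_of_injective A.val Subtype.val_injective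
  let e := MonoidHom.ofInjective
    (map_injective (n := n) (f := (A.val : A →+* k)) Subtype.val_injective)
  let φA := φ.codRestrict _ fun g => hle ⟨g, rfl⟩
  refine .of_injective (f := e.symm.toMonoidHom.comp φA) fun a b hab => hφ ?_
  exact Subtype.ext_iff.mp (e.symm.injective hab)

end Matrix.GeneralLinearGroup

theorem MonoidHom.injective_of_isSimpleGroup {G H : Type*} [Group G] [IsSimpleGroup G]
    [Group H] (φ : G →* H) {g : G} (hg : φ g ≠ 1) : Function.Injective φ := by
  rw [← φ.ker_eq_bot_iff]
  refine (IsSimpleGroup.eq_bot_or_eq_top_of_normal _ φ.normal_ker).resolve_right fun h => hg ?_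
  exact φ.mem_ker.mp (h ▸ Subgroup.mem_top g)

theorem IsSimpleGroup.finite_of_residuallyFinite {G : Type*} [Group G] [IsSimpleGroup G]
    [Group.ResiduallyFinite G] : Finite G := by
  obtain ⟨g, hg⟩ := exists_ne (1 : G)
  obtain ⟨H, hgH⟩ := Group.exists_finiteIndexNormalSubgroup_notMem g hg
  rcases IsSimpleGroup.eq_bot_or_eq_top_of_normal H.toSubgroup inferInstance with h | h
  · have := H.toSubgroup.finiteIndex_iff.mp inferInstance
    rw [h, Subgroup.index_bot] at this
    exact Nat.finite_of_card_ne_zero this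
  · exact absurd (H.mem_toSubgroup_iff.mp (h ▸ Subgroup.mem_top g)) hgH

/-- An infinite, finitely generated simple group admits no nontrivial
finite-dimensional linear representation over any field. -/
theorem stmt7 (G : Type*) [Group G] [IsSimpleGroup G] [Infinite G] (hfg : Group.FG G)
    (k : Type*) [Field k] (n : ℕ) (φ : G →* GL (Fin n) k) :
    ∀ g : G, φ g = 1 := by
  intro g
  by_contra hg
  have := Matrix.GeneralLinearGroup.residuallyFinite_of_injective (φ.injective_of_isSimpleGroup hg)
  have := IsSimpleGroup.finite_of_residuallyFinite (G := G)
  exact not_finite G
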